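/- arXiv:2401.03740 — 4 statements merged into one kernel-verified Lean document; each statement's English description precedes it below -/
import Mathlib

section
/- Under the regularity condition, the range of the cross-covariance operator C_YX is contained in the range of C_X^{1/2}, and consequently there exists a unique bounded linear operator M : ℝ^p → H such that C_X^{1/2} ∘ M = C_YX ∘ C_Y^{-1/2}. -/
open MeasureTheory
open scoped RealInnerProductSpace

/-- Under the regularity condition, the range of the cross-covariance
operator `C_YX` is contained in the range of `C_X^{1/2}`, and consequently there exists a
unique bounded linear operator `M : ℝ^p → H` with `C_X^{1/2} ∘ M = C_YX ∘ C_Y^{-1/2}`. -/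
theorem statement4
    {Ω : Type} [MeasurableSpace Ω] (μ : Measure Ω) [IsProbabilityMeasure μ]
    {H : Type} [NormedAddCommGroup H] [InnerProductSpace ℝ H]
    [CompleteSpace H] [TopologicalSpace.SeparableSpace H]
    (p : ℕ) (hp : 0 < p)
    (X : Ω → H) (Y : Ω → EuclideanSpace ℝ (Fin p))
    (hXm : StronglyMeasurable X) (hYm : StronglyMeasurable Y)
    (hX2 : MemLp X 2 μ) (hY2 : MemLp Y 2 μ)
    (hXc : ∫ ω, X ω ∂μ = 0) (hYc : ∫ ω, Y ω ∂μ = 0)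
    (CX : H →L[ℝ] H)
    (hCX : ∀ x : H, CX x = ∫ ω, ⟪X ω, x⟫ • X ω ∂μ)
    (CY : EuclideanSpace ℝ (Fin p) →L[ℝ] EuclideanSpace ℝ (Fin p))
    (hCY : ∀ y : EuclideanSpace ℝ (Fin p), CY y = ∫ ω, ⟪Y ω, y⟫ • Y ω ∂μ)
    (CYX : EuclideanSpace ℝ (Fin p) →L[ℝ] H)
    (hCYX : ∀ y : EuclideanSpace ℝ (Fin p), CYX y = ∫ ω, ⟪Y ω, y⟫ • X ω ∂μ)
    (hCXinj : Function.Injective CX)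
    (lam : ℕ → ℝ) (φ : HilbertBasis ℕ ℝ H)
    (hlam : ∀ i, 0 < lam i)
    (heigX : ∀ i, CX (φ i) = lam i • φ i)
    (gam : Fin p → ℝ) (ψ : OrthonormalBasis (Fin p) ℝ (EuclideanSpace ℝ (Fin p)))
    (hgam : ∀ j, 0 < gam j)
    (heigY : ∀ j, CY (ψ j) = gam j • ψ j)
    (hreg : ∀ j, Summable (fun i =>
      (lam i)⁻¹ * (∫ ω, ⟪X ω, φ i⟫ * ⟪Y ω, ψ j⟫ ∂μ) ^ 2))
    (sqrtCX : H →L[ℝ] H)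
    (hsqrtCX_pos : ∀ x : H, 0 ≤ ⟪sqrtCX x, x⟫)
    (hsqrtCX_sa : ∀ x y : H, ⟪sqrtCX x, y⟫ = ⟪x, sqrtCX y⟫)
    (hsqrtCX_sq : sqrtCX.comp sqrtCX = CX)
    (hsqrtCX_eig : ∀ i, sqrtCX (φ i) = Real.sqrt (lam i) • φ i)
    (invSqrtCY : EuclideanSpace ℝ (Fin p) →L[ℝ] EuclideanSpace ℝ (Fin p))
    (hinvSqrtCY : ∀ j, invSqrtCY (ψ j) = (Real.sqrt (gam j))⁻¹ • ψ j)
    :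
    (∀ y : EuclideanSpace ℝ (Fin p), CYX y ∈ LinearMap.range (sqrtCX : H →ₗ[ℝ] H)) ∧
    ∃! M : EuclideanSpace ℝ (Fin p) →L[ℝ] H,
      sqrtCX.comp M = CYX.comp invSqrtCY := by
  classical
  -- Step 1: range containment for basis vectors
  have hbasis : ∀ j, CYX (ψ j) ∈ LinearMap.range (sqrtCX : H →ₗ[ℝ] H) := by
    intro j
    set c : ℕ → ℝ := fun i => ⟪φ i, CYX (ψ j)⟫ with hc
    have hint : Integrable (fun ω => ⟪Y ω, ψ j⟫ • X ω) μ := by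
      have h1 : MemLp (fun ω => ⟪Y ω, ψ j⟫) 2 μ := hY2.inner_const (ψ j)
      have := hX2.smul (φ := fun ω => ⟪Y ω, ψ j⟫) h1
        (p := 2) (q := 2) (r := 1)
        (hpqr := ⟨by norm_num [ENNReal.inv_two_add_inv_two]⟩)
      exact this.integrable le_rfl
    have hcval : ∀ i, c i = ∫ ω, ⟪X ω, φ i⟫ * ⟪Y ω, ψ j⟫ ∂μ := by
      intro i
      rw [hc]
      simp only [hCYX]
      rw [← integral_inner hint (φ i)]
      congr 1
      ext ω
      rw [real_inner_smul_right, real_inner_comm (φ i) (X ω)]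
      ring
    -- the ℓ² sequence
    set a : ℕ → ℝ := fun i => (Real.sqrt (lam i))⁻¹ * c i with ha
    have hsum : Summable (fun i => (a i) ^ 2) := by
      have := (hreg j)
      apply this.congr
      intro i
      rw [ha]
      simp only
      rw [hcval i, mul_pow, ← Real.sqrt_inv,
        Real.sq_sqrt (inv_nonneg.mpr (hlam i).le)]
    have hmem : Memℓp a 2 := by
      apply memℓp_gen
      apply hsum.congr
      intro i
      simp [ENNReal.toReal_ofNat, Real.rpow_natCast, sq_abs]
    set x : H := φ.repr.symm ⟨a, hmem⟩ with hx
    have hxrepr : ∀ i, φ.repr x i = a i := by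
      intro i; rw [hx, LinearIsometryEquiv.apply_symm_apply]
    refine ⟨x, ?_⟩
    apply φ.repr.injective
    ext i
    have h1 : φ.repr (sqrtCX x) i = ⟪φ i, sqrtCX x⟫ := φ.repr_apply_apply _ _
    have h2 : φ.repr (CYX (ψ j)) i = c i := φ.repr_apply_apply _ _
    rw [ContinuousLinearMap.coe_coe, h1, h2]
    have : ⟪φ i, sqrtCX x⟫ = Real.sqrt (lam i) * ⟪φ i, x⟫ :=
      calc ⟪φ i, sqrtCX x⟫ = ⟪sqrtCX x, φ i⟫ := real_inner_comm _ _
        _ = ⟪x, sqrtCX (φ i)⟫ := hsqrtCX_sa _ _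
        _ = ⟪x, Real.sqrt (lam i) • φ i⟫ := by rw [hsqrtCX_eig]
        _ = Real.sqrt (lam i) * ⟪x, φ i⟫ := real_inner_smul_right _ _ _
        _ = Real.sqrt (lam i) * ⟪φ i, x⟫ := by rw [real_inner_comm]
    rw [this, ← φ.repr_apply_apply, hxrepr, ha]
    simp only
    rw [← mul_assoc, mul_inv_cancel₀ (Real.sqrt_ne_zero'.mpr (hlam i)), one_mul]
  have hrange : ∀ y, CYX y ∈ LinearMap.range (sqrtCX : H →ₗ[ℝ] H) := by
    intro y
    have hy : y = ∑ j, ψ.repr y j • ψ j := (ψ.sum_repr y).symm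
    rw [hy, map_sum]
    apply Submodule.sum_mem
    intro j _
    rw [ContinuousLinearMap.map_smul]
    exact Submodule.smul_mem _ _ (hbasis j)
  refine ⟨hrange, ?_⟩
  -- injectivity of sqrtCX
  have hsq : ∀ w : H, CX w = sqrtCX (sqrtCX w) := by
    intro w; rw [← hsqrtCX_sq]; rfl
  have hinj : Function.Injective sqrtCX := by
    intro u v huv
    apply hCXinj
    rw [hsq, hsq, huv]
  -- construct M
  have hchoice : ∀ j : Fin p, ∃ z : H, sqrtCX z = CYX (invSqrtCY (ψ j)) :=
    fun j => hrange (invSqrtCY (ψ j))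
  choose g hg using hchoice
  set M₀ : EuclideanSpace ℝ (Fin p) →ₗ[ℝ] H := ψ.toBasis.constr ℝ g with hM₀
  set M : EuclideanSpace ℝ (Fin p) →L[ℝ] H :=
    { M₀ with cont := M₀.continuous_of_finiteDimensional } with hM
  have hMψ : ∀ j, M (ψ j) = g j := by
    intro j
    have : M (ψ.toBasis j) = g j := ψ.toBasis.constr_basis ℝ g j
    rwa [ψ.coe_toBasis] at this
  have hMeq : sqrtCX.comp M = CYX.comp invSqrtCY := by
    apply ContinuousLinearMap.coe_injective
    apply ψ.toBasis.ext
    intro j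
    rw [ψ.coe_toBasis]
    simp only [ContinuousLinearMap.coe_coe, ContinuousLinearMap.comp_apply]
    rw [hMψ j, hg j]
  refine ⟨M, hMeq, ?_⟩
  intro N hN
  ext y
  apply hinj
  have := congrArg (fun T : EuclideanSpace ℝ (Fin p) →L[ℝ] H => T y) (hN.trans hMeq.symm)
  simpa using this
end

section
/- Under the regularity condition, every singular value ρ_k of the operator M lies in the interval (0, 1]; equivalently, every canonical correlation between ⟨a, Y⟩ and ⟨b, X⟩_H under the unit-variance constraints Var(⟨a, Y⟩) = Var(⟨b, X⟩_H) = 1 is at most 1. -/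
open MeasureTheory
open scoped RealInnerProductSpace

/-- Cauchy–Schwarz for integrals of real functions in `ℒ²`. -/
lemma cs_integral {Ω : Type} [MeasurableSpace Ω] {μ : Measure Ω}
    {f g : Ω → ℝ} (hf : MemLp f 2 μ) (hg : MemLp g 2 μ) :
    ∫ ω, f ω * g ω ∂μ ≤ Real.sqrt (∫ ω, f ω ^ 2 ∂μ) * Real.sqrt (∫ ω, g ω ^ 2 ∂μ) := by
  set F := hf.toLp f with hF
  set G := hg.toLp g with hG
  have hFf : ∀ᵐ ω ∂μ, F ω = f ω := hf.coeFn_toLp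
  have hGg : ∀ᵐ ω ∂μ, G ω = g ω := hg.coeFn_toLp
  have h1 : ∫ ω, f ω * g ω ∂μ = ⟪F, G⟫ := by
    rw [MeasureTheory.L2.inner_def]
    refine integral_congr_ae ?_
    filter_upwards [hFf, hGg] with ω h1 h2
    simp [h1, h2, real_inner_comm, mul_comm]
  have h2 : ∫ ω, f ω ^ 2 ∂μ = ‖F‖ ^ 2 := by
    rw [← real_inner_self_eq_norm_sq, MeasureTheory.L2.inner_def]
    refine integral_congr_ae ?_
    filter_upwards [hFf] with ω h1
    simp [h1, pow_two]
  have h3 : ∫ ω, g ω ^ 2 ∂μ = ‖G‖ ^ 2 := by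
    rw [← real_inner_self_eq_norm_sq, MeasureTheory.L2.inner_def]
    refine integral_congr_ae ?_
    filter_upwards [hGg] with ω h1
    simp [h1, pow_two]
  rw [h1, h2, h3, Real.sqrt_sq (norm_nonneg _), Real.sqrt_sq (norm_nonneg _)]
  exact real_inner_le_norm F G

/-- Under the regularity condition, every singular value `ρ_k` of `M`
lies in `(0, 1]`; equivalently, every canonical correlation between `⟨a,Y⟩` and
`⟨b,X⟩_H` under the unit-variance constraints is at most `1`. -/
theorem statement8
    {Ω : Type} [MeasurableSpace Ω] (μ : Measure Ω) [IsProbabilityMeasure μ]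
    {H : Type} [NormedAddCommGroup H] [InnerProductSpace ℝ H]
    [CompleteSpace H] [TopologicalSpace.SeparableSpace H]
    (p : ℕ) (hp : 0 < p)
    (X : Ω → H) (Y : Ω → EuclideanSpace ℝ (Fin p))
    (hXm : StronglyMeasurable X) (hYm : StronglyMeasurable Y)
    (hX2 : MemLp X 2 μ) (hY2 : MemLp Y 2 μ)
    (hXc : ∫ ω, X ω ∂μ = 0) (hYc : ∫ ω, Y ω ∂μ = 0)
    (CX : H →L[ℝ] H)
    (hCX : ∀ x : H, CX x = ∫ ω, ⟪X ω, x⟫ • X ω ∂μ)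
    (CY : EuclideanSpace ℝ (Fin p) →L[ℝ] EuclideanSpace ℝ (Fin p))
    (hCY : ∀ y : EuclideanSpace ℝ (Fin p), CY y = ∫ ω, ⟪Y ω, y⟫ • Y ω ∂μ)
    (CYX : EuclideanSpace ℝ (Fin p) →L[ℝ] H)
    (hCYX : ∀ y : EuclideanSpace ℝ (Fin p), CYX y = ∫ ω, ⟪Y ω, y⟫ • X ω ∂μ)
    (hCXinj : Function.Injective CX)
    (lam : ℕ → ℝ) (φ : HilbertBasis ℕ ℝ H)
    (hlam : ∀ i, 0 < lam i)
    (heigX : ∀ i, CX (φ i) = lam i • φ i)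
    (gam : Fin p → ℝ) (ψ : OrthonormalBasis (Fin p) ℝ (EuclideanSpace ℝ (Fin p)))
    (hgam : ∀ j, 0 < gam j)
    (heigY : ∀ j, CY (ψ j) = gam j • ψ j)
    (hreg : ∀ j, Summable (fun i =>
      (lam i)⁻¹ * (∫ ω, ⟪X ω, φ i⟫ * ⟪Y ω, ψ j⟫ ∂μ) ^ 2))
    (sqrtCX : H →L[ℝ] H)
    (hsqrtCX_pos : ∀ x : H, 0 ≤ ⟪sqrtCX x, x⟫)
    (hsqrtCX_sa : ∀ x y : H, ⟪sqrtCX x, y⟫ = ⟪x, sqrtCX y⟫)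
    (hsqrtCX_sq : sqrtCX.comp sqrtCX = CX)
    (hsqrtCX_eig : ∀ i, sqrtCX (φ i) = Real.sqrt (lam i) • φ i)
    (invSqrtCY : EuclideanSpace ℝ (Fin p) →L[ℝ] EuclideanSpace ℝ (Fin p))
    (hinvSqrtCY : ∀ j, invSqrtCY (ψ j) = (Real.sqrt (gam j))⁻¹ • ψ j)
    (M : EuclideanSpace ℝ (Fin p) →L[ℝ] H)
    (hM : sqrtCX.comp M = CYX.comp invSqrtCY)
    :
    (∀ (ρ : ℝ) (f : EuclideanSpace ℝ (Fin p)) (g : H),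
        ‖f‖ = 1 → ‖g‖ = 1 → M f = ρ • g →
        ContinuousLinearMap.adjoint M g = ρ • f → 0 < ρ →
        ρ ∈ Set.Ioc (0 : ℝ) 1) ∧
    (∀ (a : EuclideanSpace ℝ (Fin p)) (b : H),
        ⟪CY a, a⟫ = 1 → ⟪CX b, b⟫ = 1 →
        (∫ ω, ⟪a, Y ω⟫ * ⟪b, X ω⟫ ∂μ) ≤ 1) := by
  classical
  -- integrability facts
  have hint_YY : ∀ v : EuclideanSpace ℝ (Fin p),
      Integrable (fun ω => ⟪Y ω, v⟫ • Y ω) μ := by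
    intro v
    rw [← memLp_one_iff_integrable]
    exact MemLp.smul (φ := fun ω => ⟪Y ω, v⟫) hY2 (hY2.inner_const v)
  have hint_XX : ∀ b : H, Integrable (fun ω => ⟪X ω, b⟫ • X ω) μ := by
    intro b
    rw [← memLp_one_iff_integrable]
    exact MemLp.smul (φ := fun ω => ⟪X ω, b⟫) hX2 (hX2.inner_const b)
  have hint_YX : ∀ v : EuclideanSpace ℝ (Fin p),
      Integrable (fun ω => ⟪Y ω, v⟫ • X ω) μ := by
    intro v
    rw [← memLp_one_iff_integrable]
    exact MemLp.smul (φ := fun ω => ⟪Y ω, v⟫) hX2 (hY2.inner_const v)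
  -- variance formulas
  have hVarY : ∀ v : EuclideanSpace ℝ (Fin p),
      ⟪CY v, v⟫ = ∫ ω, ⟪Y ω, v⟫ ^ 2 ∂μ := by
    intro v
    rw [hCY, real_inner_comm, ← integral_inner (hint_YY v) v]
    refine integral_congr_ae (Filter.Eventually.of_forall fun ω => ?_)
    simp only [real_inner_smul_right, pow_two]
    rw [real_inner_comm v (Y ω)]
  have hVarX : ∀ b : H, ⟪CX b, b⟫ = ∫ ω, ⟪X ω, b⟫ ^ 2 ∂μ := by
    intro b
    rw [hCX, real_inner_comm, ← integral_inner (hint_XX b) b]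
    refine integral_congr_ae (Filter.Eventually.of_forall fun ω => ?_)
    simp only [real_inner_smul_right, pow_two]
    rw [real_inner_comm b (X ω)]
  have hCov : ∀ (v : EuclideanSpace ℝ (Fin p)) (b : H),
      ⟪CYX v, b⟫ = ∫ ω, ⟪Y ω, v⟫ * ⟪X ω, b⟫ ∂μ := by
    intro v b
    rw [hCYX, real_inner_comm, ← integral_inner (hint_YX v) b]
    refine integral_congr_ae (Filter.Eventually.of_forall fun ω => ?_)
    simp only [real_inner_smul_right]
    rw [real_inner_comm b (X ω)]
  -- main covariance Cauchy–Schwarz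
  have hCS : ∀ (v : EuclideanSpace ℝ (Fin p)) (b : H),
      (∫ ω, ⟪Y ω, v⟫ * ⟪X ω, b⟫ ∂μ)
        ≤ Real.sqrt ⟪CY v, v⟫ * Real.sqrt ⟪CX b, b⟫ := by
    intro v b
    rw [hVarY, hVarX]
    exact cs_integral (hY2.inner_const v) (hX2.inner_const b)
  -- ⟪CY (invSqrtCY u), invSqrtCY u⟫ = ‖u‖²
  have hCYv : ∀ u : EuclideanSpace ℝ (Fin p),
      ⟪CY (invSqrtCY u), invSqrtCY u⟫ = ‖u‖ ^ 2 := by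
    intro u
    have hu : u = ∑ j, ⟪ψ j, u⟫ • ψ j := (ψ.sum_repr' u).symm
    have hS : invSqrtCY u = ∑ j, (⟪ψ j, u⟫ * (Real.sqrt (gam j))⁻¹) • ψ j := by
      conv_lhs => rw [hu]
      rw [map_sum]
      refine Finset.sum_congr rfl fun j _ => ?_
      rw [_root_.map_smul, hinvSqrtCY, smul_smul]
    have hT : CY (invSqrtCY u)
        = ∑ j, (⟪ψ j, u⟫ * Real.sqrt (gam j)) • ψ j := by
      rw [hS, map_sum]
      refine Finset.sum_congr rfl fun j _ => ?_
      rw [_root_.map_smul, heigY, smul_smul]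
      congr 1
      have h1 : Real.sqrt (gam j) * Real.sqrt (gam j) = gam j :=
        Real.mul_self_sqrt (hgam j).le
      have h2 : Real.sqrt (gam j) ≠ 0 :=
        ne_of_gt (Real.sqrt_pos.mpr (hgam j))
      rw [← h1]
      rw [Real.sqrt_mul_self (Real.sqrt_nonneg _)]
      field_simp
    rw [hT, hS, ψ.orthonormal.inner_sum]
    have huu : ‖u‖ ^ 2 = ⟪u, u⟫ := (real_inner_self_eq_norm_sq u).symm
    rw [huu]
    conv_rhs => rw [hu]
    rw [ψ.orthonormal.inner_sum]
    refine Finset.sum_congr rfl fun j _ => ?_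
    have h2 : Real.sqrt (gam j) ≠ 0 := ne_of_gt (Real.sqrt_pos.mpr (hgam j))
    simp only [starRingEnd_apply, star_trivial]
    field_simp
  -- ⟪CX b, b⟫ = ‖sqrtCX b‖²
  have hCXb : ∀ b : H, ⟪CX b, b⟫ = ‖sqrtCX b‖ ^ 2 := by
    intro b
    have : CX b = sqrtCX (sqrtCX b) := by
      rw [← hsqrtCX_sq]; rfl
    rw [this, ← real_inner_self_eq_norm_sq, hsqrtCX_sa, real_inner_comm]
  -- key inequality on the range of sqrtCX
  have hkey : ∀ (u : EuclideanSpace ℝ (Fin p)) (b : H),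
      ⟪M u, sqrtCX b⟫ ≤ ‖u‖ * ‖sqrtCX b‖ := by
    intro u b
    have h1 : ⟪M u, sqrtCX b⟫ = ⟪CYX (invSqrtCY u), b⟫ := by
      rw [← hsqrtCX_sa]
      have : sqrtCX (M u) = CYX (invSqrtCY u) := by
        have := congrArg (fun T : _ →L[ℝ] H => T u) hM
        simpa using this
      rw [this]
    rw [h1, hCov]
    calc (∫ ω, ⟪Y ω, invSqrtCY u⟫ * ⟪X ω, b⟫ ∂μ)
        ≤ Real.sqrt ⟪CY (invSqrtCY u), invSqrtCY u⟫ * Real.sqrt ⟪CX b, b⟫ :=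
          hCS _ _
      _ = ‖u‖ * ‖sqrtCX b‖ := by
          rw [hCYv, hCXb, Real.sqrt_sq (norm_nonneg _), Real.sqrt_sq (norm_nonneg _)]
  -- range of sqrtCX is dense
  have hdense : Dense (Set.range sqrtCX) := by
    have hspan : (Submodule.span ℝ (Set.range φ)) ≤ LinearMap.range (sqrtCX : H →ₗ[ℝ] H) := by
      rw [Submodule.span_le]
      rintro _ ⟨i, rfl⟩
      refine ⟨(Real.sqrt (lam i))⁻¹ • φ i, ?_⟩
      have h2 : Real.sqrt (lam i) ≠ 0 := ne_of_gt (Real.sqrt_pos.mpr (hlam i))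
      have h3 : sqrtCX ((Real.sqrt (lam i))⁻¹ • φ i)
          = (Real.sqrt (lam i))⁻¹ • sqrtCX (φ i) := map_smul sqrtCX _ _
      show sqrtCX ((Real.sqrt (lam i))⁻¹ • φ i) = φ i
      rw [h3, hsqrtCX_eig i, smul_smul, inv_mul_cancel₀ h2, one_smul]
    have hd := φ.dense_span
    intro x
    have hx : x ∈ (Submodule.span ℝ (Set.range φ)).topologicalClosure := by
      rw [hd]; trivial
    have : x ∈ closure (Submodule.span ℝ (Set.range (⇑φ)) : Set H) := hx
    refine closure_mono ?_ this
    intro y hy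
    obtain ⟨z, hz⟩ := hspan hy
    exact ⟨z, hz⟩
  -- operator norm bound
  have hMnorm : ∀ u : EuclideanSpace ℝ (Fin p), ‖M u‖ ≤ ‖u‖ := by
    intro u
    have hall : ∀ h : H, ⟪M u, h⟫ ≤ ‖u‖ * ‖h‖ := by
      have hclosed : IsClosed {h : H | ⟪M u, h⟫ ≤ ‖u‖ * ‖h‖} := by
        apply isClosed_le
        · exact continuous_const.inner continuous_id
        · exact continuous_const.mul continuous_norm
      have hsub : Set.range sqrtCX ⊆ {h : H | ⟪M u, h⟫ ≤ ‖u‖ * ‖h‖} := by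
        rintro _ ⟨b, rfl⟩
        exact hkey u b
      intro h
      have : h ∈ closure (Set.range sqrtCX) := hdense h
      have : h ∈ closure {h : H | ⟪M u, h⟫ ≤ ‖u‖ * ‖h‖} :=
        closure_mono hsub this
      rwa [hclosed.closure_eq] at this
    rcases eq_or_ne (M u) 0 with h0 | h0
    · rw [h0, norm_zero]; exact norm_nonneg u
    · have hpos : 0 < ‖M u‖ := norm_pos_iff.mpr h0
      have := hall (M u)
      rw [real_inner_self_eq_norm_sq] at this
      nlinarith
  constructor
  · intro ρ f g hf hg hMf _ hρ
    refine ⟨hρ, ?_⟩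
    have : ρ = ‖M f‖ := by
      rw [hMf, norm_smul, hg, Real.norm_eq_abs, abs_of_pos hρ, mul_one]
    rw [this]
    calc ‖M f‖ ≤ ‖f‖ := hMnorm f
      _ = 1 := hf
  · intro a b hVa hVb
    have h1 : (∫ ω, ⟪a, Y ω⟫ * ⟪b, X ω⟫ ∂μ) = ∫ ω, ⟪Y ω, a⟫ * ⟪X ω, b⟫ ∂μ := by
      refine integral_congr_ae (Filter.Eventually.of_forall fun ω => ?_)
      simp only [real_inner_comm a, real_inner_comm b]
    rw [h1]
    calc (∫ ω, ⟪Y ω, a⟫ * ⟪X ω, b⟫ ∂μ)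
        ≤ Real.sqrt ⟪CY a, a⟫ * Real.sqrt ⟪CX b, b⟫ := hCS a b
      _ = 1 := by rw [hVa, hVb, Real.sqrt_one, mul_one]
end

section
/- (Associated-factor decomposition.) Let {(r_k, α_k, β_k)}_{k=1}^K be the singular triples of C_YX, let P_α be the orthogonal projection of ℝ^p onto span{α_1, …, α_K} and P_β the orthogonal projection of H onto span{β_1, …, β_K}, and set Ỹ = P_α Y, Y^⊥ = Y − Ỹ, X̃ = P_β X, X^⊥ = X − X̃. Then Y^⊥ is uncorrelated with X and X^⊥ is uncorrelated with Y: for all y ∈ ℝ^p, E[⟨Y^⊥, y⟩ X] = 0 in H, and for all x ∈ H, E[⟨X^⊥, x⟩_H Y] = 0 in ℝ^p. -/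
open MeasureTheory
open scoped RealInnerProductSpace

lemma aux_int_smul {Ω : Type} [MeasurableSpace Ω] (μ : Measure Ω)
    {E F : Type} [NormedAddCommGroup E] [InnerProductSpace ℝ E]
    [NormedAddCommGroup F] [NormedSpace ℝ F]
    {g : Ω → E} {f : Ω → F} (hg : MemLp g 2 μ) (hf : MemLp f 2 μ) (x : E) :
    Integrable (fun ω => ⟪g ω, x⟫ • f ω) μ := by
  have h1 : MemLp (fun ω => ⟪g ω, x⟫) 2 μ := by
    simpa [Function.comp_def, real_inner_comm] using (innerSL ℝ x).comp_memLp' hg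
  have h2 : MemLp (fun ω => ⟪g ω, x⟫ • f ω) 1 μ := by
    have := hf.smul (φ := fun ω => ⟪g ω, x⟫) h1 (r := 1)
    exact this
  exact memLp_one_iff_integrable.mp h2

/-- associated-factor decomposition. With `P_α`, `P_β` the orthogonal
projections onto the spans of the left/right singular vectors of `C_YX`, and
`Ỹ = P_α Y`, `Y^⊥ = Y − Ỹ`, `X̃ = P_β X`, `X^⊥ = X − X̃`, the component `Y^⊥` is
uncorrelated with `X` and `X^⊥` is uncorrelated with `Y`: for all `y ∈ ℝ^p`,
`E[⟨Y^⊥, y⟩ X] = 0` in `H`, and for all `x ∈ H`, `E[⟨X^⊥, x⟩_H Y] = 0` in `ℝ^p`. -/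
theorem statement10
    {Ω : Type} [MeasurableSpace Ω] (μ : Measure Ω) [IsProbabilityMeasure μ]
    {H : Type} [NormedAddCommGroup H] [InnerProductSpace ℝ H]
    [CompleteSpace H] [TopologicalSpace.SeparableSpace H]
    (p : ℕ) (hp : 0 < p)
    (X : Ω → H) (Y : Ω → EuclideanSpace ℝ (Fin p))
    (hXm : StronglyMeasurable X) (hYm : StronglyMeasurable Y)
    (hX2 : MemLp X 2 μ) (hY2 : MemLp Y 2 μ)
    (hXc : ∫ ω, X ω ∂μ = 0) (hYc : ∫ ω, Y ω ∂μ = 0)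
    (CX : H →L[ℝ] H)
    (hCX : ∀ x : H, CX x = ∫ ω, ⟪X ω, x⟫ • X ω ∂μ)
    (CY : EuclideanSpace ℝ (Fin p) →L[ℝ] EuclideanSpace ℝ (Fin p))
    (hCY : ∀ y : EuclideanSpace ℝ (Fin p), CY y = ∫ ω, ⟪Y ω, y⟫ • Y ω ∂μ)
    (CYX : EuclideanSpace ℝ (Fin p) →L[ℝ] H)
    (hCYX : ∀ y : EuclideanSpace ℝ (Fin p), CYX y = ∫ ω, ⟪Y ω, y⟫ • X ω ∂μ)
    (K : ℕ) (hKp : K ≤ p)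
    (hK : Module.finrank ℝ (LinearMap.range (CYX : EuclideanSpace ℝ (Fin p) →ₗ[ℝ] H)) = K)
    (r : Fin K → ℝ) (α : Fin K → EuclideanSpace ℝ (Fin p)) (β : Fin K → H)
    (hr_anti : ∀ k j : Fin K, k ≤ j → r j ≤ r k)
    (hr_pos : ∀ k, 0 < r k)
    (hα_on : Orthonormal ℝ α) (hβ_on : Orthonormal ℝ β)
    (hCYXsvd : ∀ y : EuclideanSpace ℝ (Fin p),
      CYX y = ∑ k, (r k * ⟪y, α k⟫) • β k)
    (Pα : EuclideanSpace ℝ (Fin p) →L[ℝ] EuclideanSpace ℝ (Fin p))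
    (hPα_idem : Pα.comp Pα = Pα)
    (hPα_sa : ∀ y z : EuclideanSpace ℝ (Fin p), ⟪Pα y, z⟫ = ⟪y, Pα z⟫)
    (hPα_range : LinearMap.range (Pα : EuclideanSpace ℝ (Fin p) →ₗ[ℝ] EuclideanSpace ℝ (Fin p)) = Submodule.span ℝ (Set.range α))
    (Pβ : H →L[ℝ] H)
    (hPβ_idem : Pβ.comp Pβ = Pβ)
    (hPβ_sa : ∀ x z : H, ⟪Pβ x, z⟫ = ⟪x, Pβ z⟫)
    (hPβ_range : LinearMap.range (Pβ : H →ₗ[ℝ] H) = Submodule.span ℝ (Set.range β))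
    :
    (∀ y : EuclideanSpace ℝ (Fin p),
      (∫ ω, ⟪Y ω - Pα (Y ω), y⟫ • X ω ∂μ) = 0) ∧
    (∀ x : H,
      (∫ ω, ⟪X ω - Pβ (X ω), x⟫ • Y ω ∂μ) = 0) := by
  -- Pα fixes each α k, Pβ fixes each β k
  have hPαfix : ∀ k, Pα (α k) = α k := by
    intro k
    have hmem : α k ∈ LinearMap.range (Pα : EuclideanSpace ℝ (Fin p) →ₗ[ℝ] EuclideanSpace ℝ (Fin p)) := by
      rw [hPα_range]; exact Submodule.subset_span ⟨k, rfl⟩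
    obtain ⟨z, hz⟩ := hmem
    have : Pα (Pα z) = Pα z := by
      have := congrArg (fun T => T z) hPα_idem
      simpa using this
    rw [← hz]; exact this
  have hPβfix : ∀ k, Pβ (β k) = β k := by
    intro k
    have hmem : β k ∈ LinearMap.range (Pβ : H →ₗ[ℝ] H) := by
      rw [hPβ_range]; exact Submodule.subset_span ⟨k, rfl⟩
    obtain ⟨z, hz⟩ := hmem
    have : Pβ (Pβ z) = Pβ z := by
      have := congrArg (fun T => T z) hPβ_idem
      simpa using this
    rw [← hz]; exact this
  constructor
  · intro y
    have hptw : ∀ ω, ⟪Y ω - Pα (Y ω), y⟫ • X ω = ⟪Y ω, y - Pα y⟫ • X ω := by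
      intro ω
      rw [inner_sub_left, inner_sub_right, hPα_sa]
    calc (∫ ω, ⟪Y ω - Pα (Y ω), y⟫ • X ω ∂μ)
        = ∫ ω, ⟪Y ω, y - Pα y⟫ • X ω ∂μ := by simp_rw [hptw]
      _ = CYX (y - Pα y) := (hCYX _).symm
      _ = ∑ k, (r k * ⟪y - Pα y, α k⟫) • β k := hCYXsvd _
      _ = 0 := by
          apply Finset.sum_eq_zero
          intro k _
          have : ⟪y - Pα y, α k⟫ = 0 := by
            rw [inner_sub_left, hPα_sa, hPαfix, sub_self]
          rw [this, mul_zero, zero_smul]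
  · intro x
    set x' := fun ω => (⟪X ω - Pβ (X ω), x⟫ : ℝ)
    have hXsub : MemLp (fun ω => X ω - Pβ (X ω)) 2 μ :=
      hX2.sub (Pβ.comp_memLp' hX2)
    have hI2 : Integrable (fun ω => ⟪X ω - Pβ (X ω), x⟫ • Y ω) μ :=
      aux_int_smul μ hXsub hY2 x
    apply ext_inner_right ℝ
    intro y
    rw [inner_zero_left]
    have hI1 : Integrable (fun ω => ⟪Y ω, y⟫ • X ω) μ :=
      aux_int_smul μ hY2 hX2 y
    have lhs : ⟪(∫ ω, ⟪X ω - Pβ (X ω), x⟫ • Y ω ∂μ), y⟫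
        = ∫ ω, ⟪X ω - Pβ (X ω), x⟫ * ⟪Y ω, y⟫ ∂μ := by
      rw [real_inner_comm, ← integral_inner hI2 y]
      congr 1; funext ω
      rw [real_inner_smul_right, real_inner_comm y (Y ω)]
    have key : ⟪CYX y, x - Pβ x⟫ = ∫ ω, ⟪X ω - Pβ (X ω), x⟫ * ⟪Y ω, y⟫ ∂μ := by
      rw [hCYX y, real_inner_comm, ← integral_inner hI1 (x - Pβ x)]
      congr 1; funext ω
      rw [real_inner_smul_right]
      have e : ⟪x - Pβ x, X ω⟫ = ⟪X ω - Pβ (X ω), x⟫ := by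
        have e1 : ⟪Pβ x, X ω⟫ = ⟪Pβ (X ω), x⟫ :=
          (hPβ_sa x (X ω)).trans (real_inner_comm _ _)
        rw [inner_sub_left, inner_sub_left, e1, real_inner_comm x (X ω)]
      rw [e]; ring
    have hzero : ⟪CYX y, x - Pβ x⟫ = 0 := by
      rw [hCYXsvd y, sum_inner]
      apply Finset.sum_eq_zero
      intro k _
      rw [real_inner_smul_left]
      have : ⟪β k, x - Pβ x⟫ = 0 := by
        rw [inner_sub_right, ← hPβ_sa, hPβfix, sub_self]
      rw [this, mul_zero]
    rw [lhs, ← key, hzero]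
end

section
/- With Ỹ = P_α Y and X̃ = P_β X the projections of Y and X onto the spans of the left and right singular vectors of C_YX, the cross-covariance operator of the projected variables coincides with that of the original variables: C_{ỸX̃}(y) := E[⟨Ỹ, y⟩ X̃] = C_YX(y) for all y ∈ ℝ^p. -/
open MeasureTheory
open scoped RealInnerProductSpace

/-- With `Ỹ = P_α Y` and `X̃ = P_β X` the projections of `Y` and `X`
onto the spans of the left and right singular vectors of `C_YX`, the cross-covariance
operator of the projected variables coincides with that of the original variables:
`C_{ỸX̃}(y) = E[⟨Ỹ, y⟩ X̃] = C_YX(y)` for all `y ∈ ℝ^p`. -/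
theorem statement11
    {Ω : Type} [MeasurableSpace Ω] (μ : Measure Ω) [IsProbabilityMeasure μ]
    {H : Type} [NormedAddCommGroup H] [InnerProductSpace ℝ H]
    [CompleteSpace H] [TopologicalSpace.SeparableSpace H]
    (p : ℕ) (hp : 0 < p)
    (X : Ω → H) (Y : Ω → EuclideanSpace ℝ (Fin p))
    (hXm : StronglyMeasurable X) (hYm : StronglyMeasurable Y)
    (hX2 : MemLp X 2 μ) (hY2 : MemLp Y 2 μ)
    (hXc : ∫ ω, X ω ∂μ = 0) (hYc : ∫ ω, Y ω ∂μ = 0)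
    (CX : H →L[ℝ] H)
    (hCX : ∀ x : H, CX x = ∫ ω, ⟪X ω, x⟫ • X ω ∂μ)
    (CY : EuclideanSpace ℝ (Fin p) →L[ℝ] EuclideanSpace ℝ (Fin p))
    (hCY : ∀ y : EuclideanSpace ℝ (Fin p), CY y = ∫ ω, ⟪Y ω, y⟫ • Y ω ∂μ)
    (CYX : EuclideanSpace ℝ (Fin p) →L[ℝ] H)
    (hCYX : ∀ y : EuclideanSpace ℝ (Fin p), CYX y = ∫ ω, ⟪Y ω, y⟫ • X ω ∂μ)
    (K : ℕ) (hKp : K ≤ p)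
    (hK : Module.finrank ℝ (LinearMap.range (CYX : EuclideanSpace ℝ (Fin p) →ₗ[ℝ] H)) = K)
    (r : Fin K → ℝ) (α : Fin K → EuclideanSpace ℝ (Fin p)) (β : Fin K → H)
    (hr_anti : ∀ k j : Fin K, k ≤ j → r j ≤ r k)
    (hr_pos : ∀ k, 0 < r k)
    (hα_on : Orthonormal ℝ α) (hβ_on : Orthonormal ℝ β)
    (hCYXsvd : ∀ y : EuclideanSpace ℝ (Fin p),
      CYX y = ∑ k, (r k * ⟪y, α k⟫) • β k)
    (Pα : EuclideanSpace ℝ (Fin p) →L[ℝ] EuclideanSpace ℝ (Fin p))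
    (hPα_idem : Pα.comp Pα = Pα)
    (hPα_sa : ∀ y z : EuclideanSpace ℝ (Fin p), ⟪Pα y, z⟫ = ⟪y, Pα z⟫)
    (hPα_range : LinearMap.range (Pα : EuclideanSpace ℝ (Fin p) →ₗ[ℝ] EuclideanSpace ℝ (Fin p)) = Submodule.span ℝ (Set.range α))
    (Pβ : H →L[ℝ] H)
    (hPβ_idem : Pβ.comp Pβ = Pβ)
    (hPβ_sa : ∀ x z : H, ⟪Pβ x, z⟫ = ⟪x, Pβ z⟫)
    (hPβ_range : LinearMap.range (Pβ : H →ₗ[ℝ] H) = Submodule.span ℝ (Set.range β))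
    :
    ∀ y : EuclideanSpace ℝ (Fin p),
      (∫ ω, ⟪Pα (Y ω), y⟫ • Pβ (X ω) ∂μ) = CYX y := by
  have hPαfix : ∀ k, Pα (α k) = α k := by
    intro k
    have hmem : α k ∈ LinearMap.range (Pα : EuclideanSpace ℝ (Fin p) →ₗ[ℝ] EuclideanSpace ℝ (Fin p)) := by
      rw [hPα_range]; exact Submodule.subset_span ⟨k, rfl⟩
    obtain ⟨w, hw⟩ := hmem
    rw [← hw]; show Pα (Pα w) = Pα w; rw [← ContinuousLinearMap.comp_apply, hPα_idem]
  have hPβfix : ∀ k, Pβ (β k) = β k := by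
    intro k
    have hmem : β k ∈ LinearMap.range (Pβ : H →ₗ[ℝ] H) := by
      rw [hPβ_range]; exact Submodule.subset_span ⟨k, rfl⟩
    obtain ⟨w, hw⟩ := hmem
    rw [← hw]; show Pβ (Pβ w) = Pβ w; rw [← ContinuousLinearMap.comp_apply, hPβ_idem]
  intro y
  have hint : ∀ z : EuclideanSpace ℝ (Fin p),
      Integrable (fun ω => ⟪Y ω, z⟫ • X ω) μ := by
    intro z
    have h1 : MemLp (fun ω => ⟪Y ω, z⟫) 2 μ := by
      have heq : (fun ω => ⟪Y ω, z⟫) = (innerSL ℝ z) ∘ Y := by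
        funext ω; simp [Function.comp, real_inner_comm, mul_comm]
      rw [heq]
      exact (innerSL ℝ z).comp_memLp' hY2
    have h2 : MemLp (fun ω => ⟪Y ω, z⟫ • X ω) 1 μ := by
      have := hX2.smul h1 (p := 2) (q := 2) (r := 1) (hpqr := ?_)
      · exact this
      · constructor; rw [ENNReal.inv_two_add_inv_two, inv_one]
    exact memLp_one_iff_integrable.mp h2
  have step1 : (∫ ω, ⟪Pα (Y ω), y⟫ • Pβ (X ω) ∂μ)
      = ∫ ω, Pβ (⟪Y ω, Pα y⟫ • X ω) ∂μ := by
    congr 1; funext ω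
    rw [hPα_sa, ContinuousLinearMap.map_smul]
  have step2 : (∫ ω, Pβ (⟪Y ω, Pα y⟫ • X ω) ∂μ)
      = Pβ (∫ ω, ⟪Y ω, Pα y⟫ • X ω ∂μ) :=
    (ContinuousLinearMap.integral_comp_comm Pβ (hint (Pα y)))
  rw [step1, step2, ← hCYX, hCYXsvd, map_sum, hCYXsvd y]
  refine Finset.sum_congr rfl fun k _ => ?_
  rw [ContinuousLinearMap.map_smul, hPβfix, hPα_sa, hPαfix]
end
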